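/- Let P be a shortest s-t path in G \ {e_i} and let (x, y) be the last crossing edge of C(e_i) on P (with x ∈ T_1(e_i), y ∈ T_2(e_i)). Then replacing the prefix of P from s to x by the tree path from s to x in T_1(e_i) yields an s-t path in G \ {e_i} of length at most that of P which uses exactly one crossing edge of C(e_i). -/

import Mathlib

/-!
Write `T' = T_s \ {e_i}`. As `e_i` is a bridge of the tree and the part of `P_G(s, t)` before
`e_i` avoids it, `s` and `v_i` lie in different components of `T'`, so no edge of `T'` is a
crossing edge. The tree path from `s` to `x` lies in `T'` and weighs `d_G(s, x)`, no more than the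
prefix of `P` it replaces. The new walk can therefore cross only along the edges it keeps from
`P`, from `(x, y)` on, and `(x, y)` is the last crossing edge of `P`.
-/

open Classical SimpleGraph

noncomputable section

variable {V : Type*}

/-- Total weight of a walk, summing `w` over its darts. -/
def walkWeight (G : SimpleGraph V) (w : V → V → ℝ) {u v : V} (p : G.Walk u v) : ℝ :=
  (p.darts.map fun d => w d.fst d.snd).sum

/-- Weighted shortest-path distance: infimum of walk weights. -/
def wdist (G : SimpleGraph V) (w : V → V → ℝ) (u v : V) : ℝ :=
  sInf {r | ∃ p : G.Walk u v, walkWeight G w p = r}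

/-- The graph obtained by deleting a set of vertices (kept on the same vertex type). -/
def delVerts (G : SimpleGraph V) (S : Set V) : SimpleGraph V where
  Adj a b := G.Adj a b ∧ a ∉ S ∧ b ∉ S
  symm := ⟨fun a b h => ⟨h.1.symm, h.2.2, h.2.1⟩⟩
  loopless := ⟨fun a h => G.loopless.irrefl a h.1⟩

/-- `u` is in the subtree of `T` rooted at the `k`-th vertex of the path `vp`. -/
def inSub (T : SimpleGraph V) (vp : ℕ → V) (k : ℕ) (u : V) : Prop :=
  k = 0 ∨ (T.deleteEdges {s(vp (k-1), vp k)}).Reachable (vp k) u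

/-- The label of a vertex: the largest `k ≤ l` with `u` in the subtree rooted at `vp k`. -/
def label (T : SimpleGraph V) (vp : ℕ → V) (l : ℕ) (u : V) : ℕ :=
  sSup {k | k ≤ l ∧ inSub T vp k u}

section Weight

variable {G : SimpleGraph V} {w : V → V → ℝ}

lemma walkWeight_nonneg (hw : ∀ a b, G.Adj a b → 0 ≤ w a b) {u v : V} (p : G.Walk u v) :
    0 ≤ walkWeight G w p :=
  List.sum_nonneg <| by
    simp only [List.mem_map]
    rintro _ ⟨d, -, rfl⟩
    exact hw _ _ d.adj

lemma walkWeight_append {u v z : V} (p : G.Walk u v) (q : G.Walk v z) :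
    walkWeight G w (p.append q) = walkWeight G w p + walkWeight G w q := by
  simp [walkWeight, Walk.darts_append]

lemma walkWeight_take_add_drop {u v : V} (p : G.Walk u v) (n : ℕ) :
    walkWeight G w (p.take n) + walkWeight G w (p.drop n) = walkWeight G w p := by
  simp only [walkWeight, Walk.darts_take, Walk.darts_drop, ← List.sum_append, ← List.map_append,
    List.take_append_drop]

lemma walkWeight_mapLe {G' : SimpleGraph V} (h : G ≤ G') {u v : V} (p : G.Walk u v) :
    walkWeight G' w (p.mapLe h) = walkWeight G w p := by
  simp only [walkWeight, Walk.mapLe, Walk.darts_map, List.map_map]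
  rfl

lemma walkWeight_bypass_le [DecidableEq V] (hw : ∀ a b, G.Adj a b → 0 ≤ w a b) {u v : V}
    (p : G.Walk u v) : walkWeight G w p.bypass ≤ walkWeight G w p := by
  refine List.Sublist.sum_le_sum (p.darts_bypass_sublist_darts.map _) ?_
  simp only [List.mem_map]
  rintro _ ⟨d, -, rfl⟩
  exact hw _ _ d.adj

lemma wdist_le_walkWeight (hw : ∀ a b, G.Adj a b → 0 ≤ w a b) {u v : V} (p : G.Walk u v) :
    wdist G w u v ≤ walkWeight G w p :=
  csInf_le ⟨0, fun _ ⟨q, hq⟩ => hq ▸ walkWeight_nonneg hw q⟩ ⟨p, rfl⟩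

lemma SimpleGraph.IsTree.walkWeight_le_wdist {T : SimpleGraph V} (hT : T.IsTree)
    (hw : ∀ a b, T.Adj a b → 0 ≤ w a b) {u v : V} {R : T.Walk u v} (hR : R.IsPath) :
    walkWeight T w R ≤ wdist T w u v := by
  refine le_csInf ⟨_, R, rfl⟩ ?_
  rintro _ ⟨q, rfl⟩
  calc walkWeight T w R = walkWeight T w q.bypass := by
        rw [(hT.existsUnique_path u v).unique q.bypass_isPath hR]
    _ ≤ walkWeight T w q := walkWeight_bypass_le hw q

lemma SimpleGraph.IsTree.walkWeight_le_of_wdist_eq {T : SimpleGraph V} (hT : T.IsTree)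
    (hTG : T ≤ G) (hw : ∀ a b, G.Adj a b → 0 ≤ w a b) {u v : V}
    (hd : wdist T w u v = wdist G w u v)
    {R : T.Walk u v} (hR : R.IsPath) (q : G.Walk u v) : walkWeight T w R ≤ walkWeight G w q :=
  calc walkWeight T w R ≤ wdist T w u v := hT.walkWeight_le_wdist (fun a b h => hw a b (hTG h)) hR
    _ = wdist G w u v := hd
    _ ≤ walkWeight G w q := wdist_le_walkWeight hw q

end Weight

section Cut

/-- For `H = T_s \ {e_i}`, `a = s` and `b = v_i`, the edges of `G \ {e_i}` with this property
form `C(e_i)`. -/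
def Crosses (H : SimpleGraph V) (a b : V) (e : Sym2 V) : Prop :=
  ∃ x y, e = s(x, y) ∧ H.Reachable a x ∧ H.Reachable b y

variable {H : SimpleGraph V} {a b : V}

lemma crosses_mk_iff {x y : V} :
    Crosses H a b s(x, y) ↔
      (H.Reachable a x ∧ H.Reachable b y) ∨ (H.Reachable a y ∧ H.Reachable b x) := by
  constructor
  · rintro ⟨x', y', h, hax, hby⟩
    rcases Sym2.eq_iff.mp h with ⟨rfl, rfl⟩ | ⟨rfl, rfl⟩
    exacts [Or.inl ⟨hax, hby⟩, Or.inr ⟨hax, hby⟩]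
  · rintro (⟨hax, hby⟩ | ⟨hay, hbx⟩)
    exacts [⟨x, y, rfl, hax, hby⟩, ⟨y, x, Sym2.eq_swap, hay, hbx⟩]

lemma Crosses.notMem_edgeSet (hab : ¬ H.Reachable a b) {e : Sym2 V} (hc : Crosses H a b e) :
    e ∉ H.edgeSet := by
  obtain ⟨x, y, rfl, hax, hby⟩ := hc
  exact fun hxy => hab ((hax.trans (H.mem_edgeSet.mp hxy).reachable).trans hby.symm)

end Cut

section Walks

variable {G : SimpleGraph V} {u v : V}

lemma SimpleGraph.Walk.mk_getVert_mem_edges_drop (p : G.Walk u v) {n : ℕ} (hn : n < p.length) :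
    s(p.getVert n, p.getVert (n + 1)) ∈ (p.drop n).edges :=
  (p.drop n).mk_mem_edges_iff_exists.mpr ⟨0, by simp; omega, by simp⟩

lemma SimpleGraph.Walk.exists_of_mk_mem_edges_drop (p : G.Walk u v) {n : ℕ} {x y : V}
    (h : s(x, y) ∈ (p.drop n).edges) :
    ∃ m, n ≤ m ∧ m < p.length ∧ s(p.getVert m, p.getVert (m + 1)) = s(x, y) := by
  obtain ⟨k, hk, hxy⟩ := (p.drop n).mk_mem_edges_iff_exists.mp h
  refine ⟨n + k, by omega, by simp at hk; omega, ?_⟩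
  simpa [Nat.add_assoc] using hxy

/-- The prefix of a path before its `i`-th edge avoids that edge. -/
lemma SimpleGraph.Walk.IsPath.reachable_deleteEdges_getVert {H : SimpleGraph V} {p : G.Walk u v}
    (hp : p.IsPath) (hpH : ∀ e ∈ p.edges, e ∈ H.edgeSet) {i : ℕ} (hi : i < p.length) :
    (H.deleteEdges {s(p.getVert i, p.getVert (i + 1))}).Reachable u (p.getVert i) := by
  have hinj {j k : ℕ} (hj : j ≤ p.length) (hk : k ≤ p.length)
      (h : p.getVert j = p.getVert k) : j = k := hp.getVert_injOn hj hk h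
  refine ⟨(p.take i).transfer _ fun e he => ?_⟩
  rw [edgeSet_deleteEdges]
  refine ⟨hpH e ?_, ?_⟩
  · rw [Walk.edges_take] at he
    exact List.mem_of_mem_take he
  · induction e using Sym2.inductionOn with | hf x y => ?_
    obtain ⟨j, hj, hxy⟩ := (p.take i).mk_mem_edges_iff_exists.mp he
    simp only [Walk.take_length, Walk.take_getVert] at hj hxy
    rw [min_eq_right (by omega), min_eq_right (by omega)] at hxy
    rw [Set.mem_singleton_iff, ← hxy, Sym2.eq_iff]
    rintro (⟨h, -⟩ | ⟨h, -⟩) <;> exact absurd (hinj (by omega) (by omega) h) (by omega)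

lemma SimpleGraph.IsTree.not_reachable_deleteEdges {T : SimpleGraph V} (hT : T.IsTree)
    {p : G.Walk u v} (hp : p.IsPath) (hpT : ∀ e ∈ p.edges, e ∈ T.edgeSet) {i : ℕ}
    (hi : i < p.length) :
    ¬ (T.deleteEdges {s(p.getVert i, p.getVert (i + 1))}).Reachable u (p.getVert (i + 1)) := by
  have hadj : T.Adj (p.getVert i) (p.getVert (i + 1)) :=
    hpT _ (p.mk_mem_edges_iff_exists.mpr ⟨i, hi, rfl⟩)
  have hbridge := isAcyclic_iff_forall_adj_isBridge.mp hT.isAcyclic hadj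
  rw [isBridge_iff] at hbridge
  exact fun h => hbridge ((hp.reachable_deleteEdges_getVert hpT hi).symm.trans h)

end Walks

/-- The witness is `R` followed by `P` from its `n`-th vertex on. -/
lemma exists_splice_crosses_eq {G H : SimpleGraph V} {w : V → V → ℝ} (hHG : H ≤ G)
    {a b t : V} (hab : ¬ H.Reachable a b) (P : G.Walk a t) {n : ℕ} (hn : n < P.length)
    (R : H.Walk a (P.getVert n)) (hR : walkWeight H w R ≤ walkWeight G w (P.take n))
    (hlast : ∀ m, n < m → m < P.length →
      ¬ Crosses H a b s(P.getVert m, P.getVert (m + 1))) :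
    ∃ Q : G.Walk a t, walkWeight G w Q ≤ walkWeight G w P ∧
      s(P.getVert n, P.getVert (n + 1)) ∈ Q.edges ∧
      ∀ e ∈ Q.edges, Crosses H a b e → e = s(P.getVert n, P.getVert (n + 1)) := by
  refine ⟨(R.mapLe hHG).append (P.drop n), ?_, ?_, ?_⟩
  · rw [walkWeight_append, walkWeight_mapLe, ← walkWeight_take_add_drop P n]
    linarith
  · exact Walk.edges_append _ _ ▸ List.mem_append_right _ (P.mk_getVert_mem_edges_drop hn)
  · intro e he hc
    obtain ⟨x, y, rfl, -⟩ := id hc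
    rw [Walk.edges_append, Walk.edges_mapLe_eq_edges, List.mem_append] at he
    rcases he with hR | hP
    · exact absurd (R.edges_subset_edgeSet hR) (hc.notMem_edgeSet hab)
    · obtain ⟨m, hnm, hm, hxy⟩ := P.exists_of_mk_mem_edges_drop hP
      obtain rfl | hnm := hnm.eq_or_lt
      · exact hxy.symm
      · exact absurd (hxy ▸ hc) (hlast m hnm hm)

theorem stmt19_general {V : Type*}
    (G : SimpleGraph V) (w : V → V → ℝ)
    (hw : ∀ a b, G.Adj a b → 0 < w a b)
    (s t : V) (p : G.Walk s t) (hp : p.IsPath)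
    (T : SimpleGraph V) (hTG : T ≤ G) (hT : T.IsTree)
    (hSPT : ∀ v, wdist T w s v = wdist G w s v)
    (hPT : ∀ e ∈ p.edges, e ∈ T.edgeSet)
    (i : ℕ) (hi1 : 1 ≤ i) (hil : i ≤ p.length)
    (P : (G.deleteEdges {s(p.getVert (i-1), p.getVert i)}).Walk s t)
    (x y : V) (n : ℕ) (hn : n < P.length)
    (hnx : P.getVert n = x) (hny : P.getVert (n + 1) = y)
    (hcx : (T.deleteEdges {s(p.getVert (i-1), p.getVert i)}).Reachable s x)
    (hcy : (T.deleteEdges {s(p.getVert (i-1), p.getVert i)}).Reachable (p.getVert i) y)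
    (hlast : ∀ m, n < m → m < P.length →
      ¬ (((T.deleteEdges {s(p.getVert (i-1), p.getVert i)}).Reachable s (P.getVert m) ∧
          (T.deleteEdges {s(p.getVert (i-1), p.getVert i)}).Reachable (p.getVert i)
            (P.getVert (m+1))) ∨
         ((T.deleteEdges {s(p.getVert (i-1), p.getVert i)}).Reachable s (P.getVert (m+1)) ∧
          (T.deleteEdges {s(p.getVert (i-1), p.getVert i)}).Reachable (p.getVert i)
            (P.getVert m)))) :
    ∃ Q : (G.deleteEdges {s(p.getVert (i-1), p.getVert i)}).Walk s t,
      walkWeight (G.deleteEdges {s(p.getVert (i-1), p.getVert i)}) w Q ≤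
        walkWeight (G.deleteEdges {s(p.getVert (i-1), p.getVert i)}) w P ∧
      s(x, y) ∈ Q.edges ∧
      (∃! e, e ∈ Q.edges ∧ (fun e => e ∈ G.edgeSet ∧ e ≠ s(p.getVert (i-1), p.getVert i) ∧
      ∃ x y, e = s(x, y) ∧
        (T.deleteEdges {s(p.getVert (i-1), p.getVert i)}).Reachable s x ∧
        (T.deleteEdges {s(p.getVert (i-1), p.getVert i)}).Reachable (p.getVert i) y) e) := by
  subst hnx hny
  have hw0 : ∀ a b, G.Adj a b → 0 ≤ w a b := fun a b h => (hw a b h).le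
  have hsep : ¬ (T.deleteEdges {s(p.getVert (i-1), p.getVert i)}).Reachable s (p.getVert i) := by
    have := hT.not_reachable_deleteEdges hp hPT (i := i - 1) (by omega)
    rwa [Nat.sub_add_cancel hi1] at this
  obtain ⟨R⟩ := hcx
  have hR : walkWeight _ w R.bypass ≤ walkWeight _ w (P.take n) := by
    rw [← walkWeight_mapLe (deleteEdges_le _) R.bypass, ← walkWeight_mapLe (deleteEdges_le _)]
    exact hT.walkWeight_le_of_wdist_eq hTG hw0 (hSPT _) (R.bypass_isPath.mapLe _) _
  obtain ⟨Q, hQP, hxyQ, hQ⟩ := exists_splice_crosses_eq (deleteEdges_mono hTG) hsep P hn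
    R.bypass hR (by simpa only [crosses_mk_iff] using hlast)
  have hxy := deleteEdges_adj.mp (P.adj_getVert_succ hn)
  refine ⟨Q, hQP, hxyQ, _, ⟨hxyQ, hxy.1, by simpa using hxy.2, _, _, rfl, ⟨R⟩, hcy⟩, ?_⟩
  exact fun e he => hQ e he.1 he.2.2.2

theorem stmt19 {V : Type*}
    (G : SimpleGraph V) (hconn : G.Connected) (w : V → V → ℝ)
    (hw : ∀ a b, G.Adj a b → 0 < w a b) (hws : ∀ a b, w a b = w b a)
    (s t : V) (p : G.Walk s t) (hp : p.IsPath)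
    (hps : walkWeight G w p = wdist G w s t)
    (T : SimpleGraph V) (hTG : T ≤ G) (hT : T.IsTree)
    (hSPT : ∀ v, wdist T w s v = wdist G w s v)
    (hPT : ∀ e ∈ p.edges, e ∈ T.edgeSet)
    (i : ℕ) (hi1 : 1 ≤ i) (hil : i ≤ p.length)
    (P : (G.deleteEdges {s(p.getVert (i-1), p.getVert i)}).Walk s t) (hP : P.IsPath)
    (hPs : walkWeight (G.deleteEdges {s(p.getVert (i-1), p.getVert i)}) w P =
      wdist (G.deleteEdges {s(p.getVert (i-1), p.getVert i)}) w s t)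
    (x y : V) (n : ℕ) (hn : n < P.length)
    (hnx : P.getVert n = x) (hny : P.getVert (n + 1) = y)
    (hcx : (T.deleteEdges {s(p.getVert (i-1), p.getVert i)}).Reachable s x)
    (hcy : (T.deleteEdges {s(p.getVert (i-1), p.getVert i)}).Reachable (p.getVert i) y)
    (hlast : ∀ m, n < m → m < P.length →
      ¬ (((T.deleteEdges {s(p.getVert (i-1), p.getVert i)}).Reachable s (P.getVert m) ∧
          (T.deleteEdges {s(p.getVert (i-1), p.getVert i)}).Reachable (p.getVert i)
            (P.getVert (m+1))) ∨
         ((T.deleteEdges {s(p.getVert (i-1), p.getVert i)}).Reachable s (P.getVert (m+1)) ∧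
          (T.deleteEdges {s(p.getVert (i-1), p.getVert i)}).Reachable (p.getVert i)
            (P.getVert m)))) :
    ∃ Q : (G.deleteEdges {s(p.getVert (i-1), p.getVert i)}).Walk s t,
      walkWeight (G.deleteEdges {s(p.getVert (i-1), p.getVert i)}) w Q ≤
        walkWeight (G.deleteEdges {s(p.getVert (i-1), p.getVert i)}) w P ∧
      s(x, y) ∈ Q.edges ∧
      (∃! e, e ∈ Q.edges ∧ (fun e => e ∈ G.edgeSet ∧ e ≠ s(p.getVert (i-1), p.getVert i) ∧
      ∃ x y, e = s(x, y) ∧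
        (T.deleteEdges {s(p.getVert (i-1), p.getVert i)}).Reachable s x ∧
        (T.deleteEdges {s(p.getVert (i-1), p.getVert i)}).Reachable (p.getVert i) y) e) :=
  stmt19_general G w hw s t p hp T hTG hT hSPT hPT i hi1 hil P x y n hn hnx hny hcx hcy hlast
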